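/- Let (α_i)_{i∈[1,N]} be roots constructed from a sequence of simple roots (β_i) by α_i = s_{β_1}···s_{β_{i-1}}(β_i). Then for i < j: ⟨β_i^∨, β_j⟩ = Σ_{k=1}^{j-i} (-1)^k Σ_{i = i_0 < i_1 < ··· < i_k = j} Π_{x=0}^{k-1} ⟨α_{i_x}^∨, α_{i_{x+1}}⟩. -/

import Mathlib

/-! Write `w_k = s_{β_0} ⋯ s_{β_{k-1}}`, so that `α_k = w_k β_k`. Since reflections are linear,
`w_{k+1} x = w_k x - ⟨β_k^∨, x⟩ α_k`, and telescoping gives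
`w_i β_j = α_j + ∑_{i ≤ l < j} ⟨β_l^∨, β_j⟩ α_l`. As `w_i` is an isometry,
`⟨α_i^∨, w_i β_j⟩ = ⟨β_i^∨, β_j⟩` and `⟨α_i^∨, α_i⟩ = 2`, so pairing with `α_i^∨` shows that
`p_i = ⟨β_i^∨, β_j⟩` satisfies the triangular recursion
`p_i = -⟨α_i^∨, α_j⟩ - ∑_{i < m < j} ⟨α_i^∨, α_m⟩ p_m`. Splitting a chain `i < i_1 < ⋯ < j`
after its first step shows that the alternating chain sum satisfies the same recursion, and the
recursion determines its solution. -/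

open RealInnerProductSpace

variable {V : Type*} [NormedAddCommGroup V] [InnerProductSpace ℝ V]

/-- The coroot pairing `⟨α^∨, x⟩ = 2 (α, x)/(α, α)`. -/
noncomputable def pairC (α x : V) : ℝ := 2 * ⟪α, x⟫ / ⟪α, α⟫

/-- The reflection in the root `α`. -/
noncomputable def sref (α : V) (x : V) : V := x - pairC α x • α

/-- `wSeq β k = s_{β 0} ∘ ⋯ ∘ s_{β (k-1)}`. -/
noncomputable def wSeq (β : ℕ → V) : ℕ → V → V
  | 0 => id
  | k + 1 => wSeq β k ∘ sref (β k)

/-- `alphaSeq β k = s_{β 0} ⋯ s_{β (k-1)} (β k)`; in the 1-indexed notation of the paper,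
`α_k = s_{β_1} ⋯ s_{β_{k-1}} (β_k)`. -/
noncomputable def alphaSeq (β : ℕ → V) (k : ℕ) : V := wSeq β k (β k)

/-- `wSeqRev β k = s_{β (k-1)} ∘ ⋯ ∘ s_{β 0}`, the word read in the opposite order. -/
noncomputable def wSeqRev (β : ℕ → V) : ℕ → V → V
  | 0 => id
  | k + 1 => sref (β k) ∘ wSeqRev β k

open scoped Classical in
/-- The alternating sum `∑_{k=1}^{j-i} (-1)^k ∑_{i = i₀ < i₁ < ⋯ < i_k = j}
∏_{x=0}^{k-1} ⟨α_{i_x}^∨, α_{i_{x+1}}⟩`, where the inner sum runs over all strictly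
increasing chains from `i` to `j`. -/
noncomputable def chainSum (α : ℕ → V) (i j : ℕ) : ℝ :=
  ∑ k ∈ Finset.Icc 1 (j - i), (-1 : ℝ) ^ k *
    ∑ c ∈ Finset.univ.filter (fun c : Fin (k + 1) → Fin (j + 1) =>
        StrictMono c ∧ (c 0 : ℕ) = i ∧ (c (Fin.last k) : ℕ) = j),
      ∏ x : Fin k, pairC (α (c x.castSucc)) (α (c x.succ))

section Chains

-- An `abbrev`, so that instance search decides it as a conjunction, as in `chainSum`.
abbrev IsIndexChain (k i j : ℕ) (c : Fin (k + 1) → Fin (j + 1)) : Prop :=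
  StrictMono c ∧ (c 0 : ℕ) = i ∧ (c (Fin.last k) : ℕ) = j

lemma isIndexChain_cons_iff {k i j : ℕ} (a : Fin (j + 1)) (t : Fin (k + 1) → Fin (j + 1)) :
    IsIndexChain (k + 1) i j (Fin.cons a t) ↔
      (a : ℕ) = i ∧ i < t 0 ∧ IsIndexChain k (t 0) j t := by
  rw [IsIndexChain, IsIndexChain, Fin.cons_zero, Fin.cons_last,
    show StrictMono (Fin.cons a t : Fin (k + 2) → Fin (j + 1)) ↔ a < t 0 ∧ StrictMono t from
      strictMono_vecCons, Fin.lt_def]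
  constructor
  · rintro ⟨⟨h0, hmono⟩, rfl, hlast⟩
    exact ⟨rfl, h0, hmono, rfl, hlast⟩
  · rintro ⟨rfl, h0, hmono, -, hlast⟩
    exact ⟨⟨h0, hmono⟩, rfl, hlast⟩

variable {R : Type*} [CommRing R] (q : ℕ → ℕ → R)

open scoped Classical in
noncomputable def chainWeight (k i j : ℕ) : R :=
  ∑ c ∈ Finset.univ.filter (IsIndexChain k i j), ∏ x : Fin k, q (c x.castSucc) (c x.succ)

noncomputable def altChainWeight (i j : ℕ) : R :=
  ∑ k ∈ Finset.Icc 1 (j - i), (-1 : R) ^ k * chainWeight q k i j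

lemma chainWeight_zero (i j : ℕ) : chainWeight q 0 i j = if i = j then 1 else 0 := by
  have hchain (c : Fin 1 → Fin (j + 1)) :
      IsIndexChain 0 i j c ↔ i = j ∧ c = fun _ => Fin.last j := by
    refine ⟨fun ⟨_, h0, hlast⟩ => ⟨h0.symm.trans hlast, funext fun x => ?_⟩, ?_⟩
    · rw [Subsingleton.elim x (Fin.last 0)]
      exact Fin.ext hlast
    · rintro ⟨rfl, rfl⟩
      exact ⟨fun a b hab => absurd hab (Subsingleton.elim (α := Fin 1) a b).not_lt, rfl, rfl⟩
  simp only [chainWeight, hchain, Finset.univ_eq_empty, Finset.prod_empty]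
  split_ifs with h <;> simp [h, Finset.filter_eq']

lemma chainWeight_succ (k i j : ℕ) :
    chainWeight q (k + 1) i j = ∑ m ∈ Finset.Ioc i j, q i m * chainWeight q k m j := by
  simp only [chainWeight, Finset.mul_sum]
  rw [Finset.sum_sigma']
  refine Finset.sum_bij' (fun c _ => ⟨(Fin.tail c 0 : ℕ), Fin.tail c⟩)
    (fun p hp => Fin.cons ⟨i, by have := Finset.mem_Ioc.1 (Finset.mem_sigma.1 hp).1; omega⟩ p.2)
    ?_ ?_ ?_ ?_ ?_
  · intro c hc
    rw [Finset.mem_filter, ← Fin.cons_self_tail c, isIndexChain_cons_iff] at hc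
    obtain ⟨-, -, hi, htail⟩ := hc
    simp only [Finset.mem_sigma, Finset.mem_Ioc, Finset.mem_filter, Finset.mem_univ, true_and]
    exact ⟨⟨hi, Nat.lt_succ_iff.1 (Fin.tail c 0).isLt⟩, htail⟩
  · rintro ⟨m, t⟩ hp
    simp only [Finset.mem_sigma, Finset.mem_Ioc, Finset.mem_filter, Finset.mem_univ,
      true_and] at hp ⊢
    obtain ⟨⟨hi, -⟩, ht⟩ := hp
    rw [isIndexChain_cons_iff, ht.2.1]
    exact ⟨rfl, hi, ht.2.1 ▸ ht⟩
  · intro c hc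
    rw [Finset.mem_filter] at hc
    conv_rhs => rw [← Fin.cons_self_tail c]
    congr 1
    exact Fin.ext hc.2.2.1.symm
  · rintro ⟨m, t⟩ hp
    simp only [Finset.mem_sigma, Finset.mem_filter] at hp
    simp only [Fin.tail_cons, hp.2.2.2.1]
  · intro c hc
    rw [Finset.mem_filter] at hc
    rw [Fin.prod_univ_succ, Fin.castSucc_zero, hc.2.2.1]
    rfl

lemma chainWeight_eq_zero_of_lt {k i j : ℕ} (h : j < i + k) : chainWeight q k i j = 0 := by
  induction k generalizing i with
  | zero => simp [chainWeight_zero, show i ≠ j by omega]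
  | succ k ih =>
    rw [chainWeight_succ]
    refine Finset.sum_eq_zero fun m hm => ?_
    rw [Finset.mem_Ioc] at hm
    rw [ih (by omega), mul_zero]

lemma altChainWeight_eq_sum_range (i j : ℕ) :
    altChainWeight q i j =
      ∑ k ∈ Finset.range (j - i), (-1 : R) ^ (k + 1) * chainWeight q (k + 1) i j := by
  rw [altChainWeight, ← Finset.Ico_add_one_right_eq_Icc, Finset.range_eq_Ico,
    Finset.sum_Ico_add' (fun k => (-1 : R) ^ k * chainWeight q k i j)]

lemma sum_range_chainWeight {m j n : ℕ} (hmj : m ≤ j) (hn : j - m < n) :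
    ∑ k ∈ Finset.range n, (-1 : R) ^ k * chainWeight q k m j =
      (if m = j then 1 else 0) + altChainWeight q m j := by
  have hvanish : ∀ k ∈ Finset.range n, k ∉ Finset.range (j - m + 1) →
      (-1 : R) ^ k * chainWeight q k m j = 0 := by
    intro k _ hk
    rw [Finset.mem_range] at hk
    rw [chainWeight_eq_zero_of_lt q (by omega), mul_zero]
  rw [← Finset.sum_subset (Finset.range_subset_range.2 (by omega)) hvanish,
    Finset.sum_range_succ', altChainWeight_eq_sum_range, chainWeight_zero]
  simp only [pow_zero, one_mul, add_comm]

lemma altChainWeight_self (j : ℕ) : altChainWeight q j j = 0 := by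
  simp [altChainWeight]

lemma altChainWeight_eq_neg_sum {i j : ℕ} (hij : i < j) :
    altChainWeight q i j = -q i j - ∑ m ∈ Finset.Ioo i j, q i m * altChainWeight q m j := by
  have hinner : ∀ m ∈ Finset.Ioc i j,
      ∑ k ∈ Finset.range (j - i), (-1 : R) ^ k * chainWeight q k m j =
        (if m = j then 1 else 0) + altChainWeight q m j := by
    intro m hm
    rw [Finset.mem_Ioc] at hm
    exact sum_range_chainWeight q hm.2 (by omega)
  calc altChainWeight q i j
      = -∑ m ∈ Finset.Ioc i j, q i m *
          ∑ k ∈ Finset.range (j - i), (-1 : R) ^ k * chainWeight q k m j := by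
        simp only [altChainWeight_eq_sum_range, chainWeight_succ, Finset.mul_sum,
          ← Finset.sum_neg_distrib]
        rw [Finset.sum_comm]
        refine Finset.sum_congr rfl fun m _ => Finset.sum_congr rfl fun k _ => ?_
        ring
    _ = -∑ m ∈ Finset.Ioc i j, q i m * ((if m = j then 1 else 0) + altChainWeight q m j) := by
        rw [Finset.sum_congr rfl fun m hm => by rw [hinner m hm]]
    _ = -q i j - ∑ m ∈ Finset.Ioo i j, q i m * altChainWeight q m j := by
        rw [← Finset.Ioo_insert_right hij, Finset.sum_insert Finset.right_notMem_Ioo,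
          altChainWeight_self, if_pos rfl,
          Finset.sum_congr rfl fun m hm => by rw [if_neg (Finset.mem_Ioo.1 hm).2.ne]]
        simp only [add_zero, zero_add, mul_one]
        ring

lemma eq_altChainWeight_of_eq_neg_sum {j : ℕ} (f : ℕ → R)
    (hf : ∀ i < j, f i = -q i j - ∑ m ∈ Finset.Ioo i j, q i m * f m) :
    ∀ i < j, f i = altChainWeight q i j := by
  intro i hij
  obtain ⟨d, hd⟩ : ∃ d, j - i = d := ⟨_, rfl⟩
  induction d using Nat.strong_induction_on generalizing i with
  | _ d ih =>
    rw [hf i hij, altChainWeight_eq_neg_sum q hij]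
    congr 1
    refine Finset.sum_congr rfl fun m hm => ?_
    rw [Finset.mem_Ioo] at hm
    rw [ih (j - m) (by omega) m hm.2 rfl]

end Chains

section Reflections

lemma pairC_self {a : V} (ha : a ≠ 0) : pairC a a = 2 := by
  rw [pairC, mul_div_assoc, div_self (inner_self_ne_zero.2 ha), mul_one]

lemma pairC_add (a x y : V) : pairC a (x + y) = pairC a x + pairC a y := by
  simp only [pairC, inner_add_right]
  ring

lemma pairC_smul (a : V) (r : ℝ) (x : V) : pairC a (r • x) = r * pairC a x := by
  simp only [pairC, real_inner_smul_right]
  ring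

lemma pairC_sum {ι : Type*} (a : V) (s : Finset ι) (f : ι → V) :
    pairC a (∑ l ∈ s, f l) = ∑ l ∈ s, pairC a (f l) :=
  map_sum (AddMonoidHom.mk' (pairC a) (pairC_add a)) f s

lemma sref_sub_smul (a x y : V) (r : ℝ) : sref a (x - r • y) = sref a x - r • sref a y := by
  simp only [sref, sub_eq_add_neg, ← neg_smul, pairC_add, pairC_smul]
  module

lemma inner_sref (a x y : V) : ⟪sref a x, sref a y⟫ = ⟪x, y⟫ := by
  rcases eq_or_ne a 0 with rfl | ha
  · simp [sref, pairC]
  · have h : ⟪a, a⟫ ≠ 0 := inner_self_ne_zero.2 ha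
    simp only [sref, pairC, inner_sub_left, inner_sub_right, real_inner_smul_left,
      real_inner_smul_right, real_inner_comm x a]
    field_simp
    ring

variable (β : ℕ → V)

lemma inner_wSeq (k : ℕ) (x y : V) : ⟪wSeq β k x, wSeq β k y⟫ = ⟪x, y⟫ := by
  induction k generalizing x y with
  | zero => rfl
  | succ k ih => rw [wSeq, Function.comp_apply, Function.comp_apply, ih, inner_sref]

lemma pairC_wSeq (k : ℕ) (x y : V) : pairC (wSeq β k x) (wSeq β k y) = pairC x y := by
  simp only [pairC, inner_wSeq]

lemma wSeq_sub_smul (k : ℕ) (x y : V) (r : ℝ) :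
    wSeq β k (x - r • y) = wSeq β k x - r • wSeq β k y := by
  induction k generalizing x y with
  | zero => rfl
  | succ k ih => simp only [wSeq, Function.comp_apply, sref_sub_smul, ih]

lemma wSeq_succ_apply (k : ℕ) (x : V) :
    wSeq β (k + 1) x = wSeq β k x - pairC (β k) x • alphaSeq β k :=
  wSeq_sub_smul β k x (β k) _

lemma wSeq_eq_add_sum (x : V) {i k : ℕ} (hik : i ≤ k) :
    wSeq β i x = wSeq β k x + ∑ l ∈ Finset.Ico i k, pairC (β l) x • alphaSeq β l := by
  induction k, hik using Nat.le_induction with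
  | base => simp
  | succ k hik ih =>
    rw [ih, wSeq_succ_apply, Finset.sum_Ico_succ_top hik]
    abel

lemma pairC_eq_neg_sum {i j : ℕ} (hβi : β i ≠ 0) (hij : i < j) :
    pairC (β i) (β j) = -pairC (alphaSeq β i) (alphaSeq β j) -
      ∑ m ∈ Finset.Ioo i j, pairC (alphaSeq β i) (alphaSeq β m) * pairC (β m) (β j) := by
  have hself : pairC (alphaSeq β i) (alphaSeq β i) = 2 := by
    rw [alphaSeq, pairC_wSeq, pairC_self hβi]
  have hexpand : pairC (β i) (β j) = pairC (alphaSeq β i)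
      (alphaSeq β j + ∑ l ∈ Finset.Ico i j, pairC (β l) (β j) • alphaSeq β l) := by
    rw [← pairC_wSeq β i, wSeq_eq_add_sum β (β j) hij.le]
    rfl
  rw [← Finset.Ioo_insert_left hij, Finset.sum_insert Finset.left_notMem_Ioo] at hexpand
  simp only [pairC_add, pairC_sum, pairC_smul, hself] at hexpand
  linarith [Finset.sum_congr rfl fun m (_ : m ∈ Finset.Ioo i j) =>
    mul_comm (pairC (β m) (β j)) (pairC (alphaSeq β i) (alphaSeq β m))]

end Reflections

lemma chainSum_eq_altChainWeight (α : ℕ → V) (i j : ℕ) :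
    chainSum α i j = altChainWeight (fun a b => pairC (α a) (α b)) i j :=
  rfl

theorem beta_pairing_as_alternating_chain_sum_general
    (Φ : Set V) (hne : ∀ α ∈ Φ, α ≠ 0)
    (N : ℕ) (β : ℕ → V) (hβ : ∀ i, i < N → β i ∈ Φ) :
    ∀ i j, i < j → j < N → pairC (β i) (β j) = chainSum (alphaSeq β) i j := by
  intro i j hij hjN
  rw [chainSum_eq_altChainWeight]
  refine eq_altChainWeight_of_eq_neg_sum _ (fun m => pairC (β m) (β j)) (fun m hmj => ?_) i hij
  exact pairC_eq_neg_sum β (hne _ (hβ m (by omega))) hmj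

/-- Let `β 0, …, β (N-1)` be simple roots of a root system `Φ` and
`α_k = s_{β_1} ⋯ s_{β_{k-1}}(β_k)`.  Then for `i < j < N`:
`⟨β_i^∨, β_j⟩ = ∑_{k=1}^{j-i} (-1)^k ∑_{i = i₀ < ⋯ < i_k = j} ∏_x ⟨α_{i_x}^∨, α_{i_{x+1}}⟩`. -/
theorem beta_pairing_as_alternating_chain_sum
    (Φ : Set V) (hne : ∀ α ∈ Φ, α ≠ 0) (hrefl : ∀ α ∈ Φ, ∀ γ ∈ Φ, sref α γ ∈ Φ)
    (N : ℕ) (β : ℕ → V) (hβ : ∀ i, i < N → β i ∈ Φ) :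
    ∀ i j, i < j → j < N → pairC (β i) (β j) = chainSum (alphaSeq β) i j :=
  beta_pairing_as_alternating_chain_sum_general Φ hne N β hβ
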